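/- arXiv:2305.03305 — 2 statements merged into one kernel-verified Lean document; each statement's English description precedes it below -/
import Mathlib

section
/- Let A, B be Hermitian positive definite n×n matrices with m·I ⪯ B ⪯ A ⪯ M·I for scalars 0 < m < M, and let p > 1. Then B^p ⪯ K(m, M, p) · A^p, where K(m, M, p) = ((p−1)(M^p − m^p) / (p(mM^p − Mm^p)))^p · (mM^p − Mm^p) / ((p−1)(M−m)) is the Kantorovich constant. -/
open scoped ComplexOrder

section KantorovichHelpers

open Real Matrix

variable {n : Type*} [Fintype n] [DecidableEq n]

private lemma my_cfc_comb {X : Matrix n n ℂ} (hX : X.IsHermitian) (a b c : ℝ) (f : ℝ → ℝ) :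
    hX.cfc (fun t => a * f t + (b * t + c)) =
      a • hX.cfc f + (b • X + c • (1 : Matrix n n ℂ)) := by
  have hdiag : (Matrix.diagonal (RCLike.ofReal ∘ (fun t => a * f t + (b * t + c)) ∘ hX.eigenvalues) : Matrix n n ℂ)
      = a • Matrix.diagonal (RCLike.ofReal ∘ f ∘ hX.eigenvalues)
        + (b • Matrix.diagonal (RCLike.ofReal ∘ hX.eigenvalues) + c • (1 : Matrix n n ℂ)) := by
    ext i j
    by_cases h : i = j
    · subst h
      simp only [Matrix.add_apply, Matrix.smul_apply, Matrix.diagonal_apply_eq,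
        Matrix.one_apply_eq, Function.comp_apply, RCLike.real_smul_eq_coe_mul, mul_one,
        ← RCLike.ofReal_mul, ← RCLike.ofReal_add]
    · simp [Matrix.diagonal_apply_ne _ h, Matrix.one_apply_ne h]
  unfold Matrix.IsHermitian.cfc
  rw [hdiag]
  simp only [Unitary.conjStarAlgAut_apply, Matrix.mul_add, Matrix.add_mul, Matrix.mul_smul, Matrix.smul_mul, Matrix.mul_one]
  have hs := hX.spectral_theorem
  rw [Unitary.conjStarAlgAut_apply] at hs
  rw [← hs, (Matrix.mem_unitaryGroup_iff).mp (Matrix.IsHermitian.eigenvectorUnitary hX).2]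

private lemma my_cfc_posSemidef {X : Matrix n n ℂ} (hX : X.IsHermitian) (f : ℝ → ℝ)
    (h : ∀ i, 0 ≤ f (hX.eigenvalues i)) : (hX.cfc f).PosSemidef := by
  unfold Matrix.IsHermitian.cfc
  have hd : (Matrix.diagonal (RCLike.ofReal ∘ f ∘ hX.eigenvalues) : Matrix n n ℂ).PosSemidef := by
    refine Matrix.posSemidef_diagonal_iff.mpr fun i => ?_
    simp only [Function.comp_apply]
    rw [RCLike.ofReal_nonneg]
    exact h i
  have := hd.mul_mul_conjTranspose_same (hX.eigenvectorUnitary : Matrix n n ℂ)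
  simpa [← Matrix.star_eq_conjTranspose] using this

private lemma my_psd_smul {C : Matrix n n ℂ} (hC : C.PosSemidef) {r : ℝ} (hr : 0 ≤ r) :
    (r • C).PosSemidef := by
  refine ⟨?_, fun x => ?_⟩
  · show (r • C)ᴴ = r • C
    rw [Matrix.conjTranspose_smul, star_trivial, hC.1.eq]
  · exact (hC.smul hr).2 x

private lemma my_eig_ge {X : Matrix n n ℂ} (hX : X.IsHermitian) {c : ℝ}
    (h : (X - c • (1 : Matrix n n ℂ)).PosSemidef) (i : n) : c ≤ hX.eigenvalues i := by
  have hv : star ⇑(hX.eigenvectorBasis i) ⬝ᵥ ⇑(hX.eigenvectorBasis i) = 1 := by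
    rw [dotProduct_comm, ← EuclideanSpace.inner_eq_star_dotProduct, inner_self_eq_norm_sq_to_K,
      hX.eigenvectorBasis.orthonormal.1 i]
    norm_num
  have h0 := h.re_dotProduct_nonneg ⇑(hX.eigenvectorBasis i)
  rw [Matrix.sub_mulVec, dotProduct_sub, map_sub, Matrix.smul_mulVec,
    Matrix.one_mulVec, dotProduct_smul, hv, RCLike.smul_re] at h0
  have := hX.eigenvalues_eq i
  simp only [RCLike.one_re, mul_one] at h0
  linarith [this ▸ h0]

private lemma my_eig_le {X : Matrix n n ℂ} (hX : X.IsHermitian) {c : ℝ}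
    (h : (c • (1 : Matrix n n ℂ) - X).PosSemidef) (i : n) : hX.eigenvalues i ≤ c := by
  have hv : star ⇑(hX.eigenvectorBasis i) ⬝ᵥ ⇑(hX.eigenvectorBasis i) = 1 := by
    rw [dotProduct_comm, ← EuclideanSpace.inner_eq_star_dotProduct, inner_self_eq_norm_sq_to_K,
      hX.eigenvectorBasis.orthonormal.1 i]
    norm_num
  have h0 := h.re_dotProduct_nonneg ⇑(hX.eigenvectorBasis i)
  rw [Matrix.sub_mulVec, dotProduct_sub, map_sub, Matrix.smul_mulVec,
    Matrix.one_mulVec, dotProduct_smul, hv, RCLike.smul_re] at h0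
  have := hX.eigenvalues_eq i
  simp only [RCLike.one_re, mul_one] at h0
  linarith [this ▸ h0]

private lemma my_chord {m M p : ℝ} (hm : 0 < m) (hmM : m < M) (hp : 1 < p) :
    ∀ t ∈ Set.Icc m M,
      t ^ p ≤ (M ^ p - m ^ p) / (M - m) * t + (M * m ^ p - m * M ^ p) / (M - m) := by
  intro t ht
  obtain ⟨htm, htM⟩ := ht
  have hMm : 0 < M - m := by linarith
  have hMm' : M - m ≠ 0 := ne_of_gt hMm
  have h := (convexOn_rpow hp.le).2 (Set.mem_Ici.mpr hm.le)
    (Set.mem_Ici.mpr (by linarith : (0:ℝ) ≤ M))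
    (show (0:ℝ) ≤ (M - t) / (M - m) from div_nonneg (by linarith) hMm.le)
    (show (0:ℝ) ≤ (t - m) / (M - m) from div_nonneg (by linarith) hMm.le)
    (by field_simp; ring)
  simp only [smul_eq_mul] at h
  have hpt : (M - t) / (M - m) * m + (t - m) / (M - m) * M = t := by
    field_simp
    ring
  rw [hpt] at h
  have heq : (M - t) / (M - m) * m ^ p + (t - m) / (M - m) * M ^ p
      = (M ^ p - m ^ p) / (M - m) * t + (M * m ^ p - m * M ^ p) / (M - m) := by
    field_simp
    ring
  linarith [heq ▸ h]

private lemma my_upper {m M p K : ℝ} (hm : 0 < m) (hmM : m < M) (hp : 1 < p)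
    (hK : K = ((p - 1) * (M ^ p - m ^ p) / (p * (m * M ^ p - M * m ^ p))) ^ p *
      (m * M ^ p - M * m ^ p) / ((p - 1) * (M - m))) :
    ∀ t : ℝ, 0 < t →
      (M ^ p - m ^ p) / (M - m) * t + (M * m ^ p - m * M ^ p) / (M - m) ≤ K * t ^ p := by
  have hM : 0 < M := hm.trans hmM
  have hMm : 0 < M - m := by linarith
  have hp1 : 0 < p - 1 := by linarith
  have hp0 : 0 < p := by linarith
  have hab : m ^ p < M ^ p := rpow_lt_rpow hm.le hmM hp0
  have ha : 0 < m ^ p := rpow_pos_of_pos hm p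
  have hnum : 0 < m * M ^ p - M * m ^ p := by
    have h1 : m ^ (p - 1) < M ^ (p - 1) := rpow_lt_rpow hm.le hmM hp1
    have hm' : m ^ p = m ^ (p - 1) * m := by
      rw [← Real.rpow_add_one (ne_of_gt hm)]; ring_nf
    have hM' : M ^ p = M ^ (p - 1) * M := by
      rw [← Real.rpow_add_one (ne_of_gt hM)]; ring_nf
    rw [hm', hM']
    nlinarith [mul_pos (mul_pos hm hM) (sub_pos.mpr h1)]
  set a := m ^ p with ha'
  set b := M ^ p with hb'
  set μ := (b - a) / (M - m) with hμ
  set ν := (M * a - m * b) / (M - m) with hν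
  set c := (p - 1) * (b - a) / (p * (m * b - M * a)) with hc
  have hc0 : 0 < c := div_pos (mul_pos hp1 (sub_pos.mpr hab)) (mul_pos hp0 hnum)
  set t₀ := p * (m * b - M * a) / ((p - 1) * (b - a)) with ht₀
  have ht₀0 : 0 < t₀ := div_pos (mul_pos hp0 hnum) (mul_pos hp1 (sub_pos.mpr hab))
  have ht₀c : t₀ = c⁻¹ := by rw [hc, ht₀, inv_div]
  have hcp : 0 < c ^ p := rpow_pos_of_pos hc0 p
  have ht₀p : t₀ ^ p = (c ^ p)⁻¹ := by rw [ht₀c, Real.inv_rpow hc0.le]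
  have hKt : K * t₀ ^ p = (m * b - M * a) / ((p - 1) * (M - m)) := by
    rw [hK, ht₀p]
    field_simp [hcp.ne', hp1.ne', hMm.ne']
  have h1 : μ * t₀ + ν = K * t₀ ^ p := by
    rw [hKt, hμ, hν, ht₀]
    field_simp [hp1.ne', hMm.ne', (sub_pos.mpr hab).ne', hnum.ne', hp0.ne']
    ring
  have h2 : K * t₀ ^ p * p = μ * t₀ := by
    rw [hKt, hμ, ht₀]
    field_simp [hp1.ne', hMm.ne', (sub_pos.mpr hab).ne', hnum.ne', hp0.ne']
  intro t ht
  set x := t / t₀ with hx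
  have hx0 : 0 < x := div_pos ht ht₀0
  have htx : t = t₀ * x := by rw [hx]; field_simp
  have hbern : 1 + p * (x - 1) ≤ x ^ p := by
    have h := one_add_mul_self_le_rpow_one_add (by linarith : (-1:ℝ) ≤ x - 1) hp.le
    rw [show (1:ℝ) + (x - 1) = x by ring] at h
    linarith
  have htp : t ^ p = t₀ ^ p * x ^ p := by rw [htx, Real.mul_rpow ht₀0.le hx0.le]
  have hKpos : 0 < K * t₀ ^ p := by rw [hKt]; exact div_pos hnum (mul_pos hp1 hMm)
  calc μ * t + ν = K * t₀ ^ p + K * t₀ ^ p * p * (x - 1) := by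
        rw [htx]; linear_combination h1 - (x - 1) * h2
    _ ≤ K * t₀ ^ p * x ^ p := by nlinarith [mul_le_mul_of_nonneg_left hbern hKpos.le]
    _ = K * t ^ p := by rw [htp]; ring

end KantorovichHelpers

/-- Kantorovich-type inequality: if `m•I ⪯ B ⪯ A ⪯ M•I` with `0 < m < M` and `p > 1`, then
`B^p ⪯ K(m,M,p) • A^p` with the generalized Kantorovich constant `K(m,M,p)`. -/
theorem stmt3 {n : Type*} [Fintype n] [DecidableEq n]
    (A B : Matrix n n ℂ) (hA : A.PosDef) (hB : B.PosDef)
    (m M : ℝ) (hm : 0 < m) (hmM : m < M) (p : ℝ) (hp : 1 < p)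
    (h1 : (B - m • (1 : Matrix n n ℂ)).PosSemidef)
    (h2 : (A - B).PosSemidef)
    (h3 : (M • (1 : Matrix n n ℂ) - A).PosSemidef)
    (K : ℝ)
    (hK : K = ((p - 1) * (M ^ p - m ^ p) / (p * (m * M ^ p - M * m ^ p))) ^ p *
      (m * M ^ p - M * m ^ p) / ((p - 1) * (M - m))) :
    (K • hA.1.cfc (fun t : ℝ => t ^ p) - hB.1.cfc (fun t : ℝ => t ^ p)).PosSemidef := by
  have hMm : 0 < M - m := by linarith
  set μ := (M ^ p - m ^ p) / (M - m) with hμ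
  set ν := (M * m ^ p - m * M ^ p) / (M - m) with hν
  have hμ0 : 0 ≤ μ := by
    have : m ^ p ≤ M ^ p := (Real.rpow_le_rpow hm.le hmM.le (by linarith))
    rw [hμ]
    apply div_nonneg (by linarith) hMm.le
  -- eigenvalue bounds
  have hAm : ∀ i, m ≤ hA.1.eigenvalues i := by
    have hAm' : (A - m • (1 : Matrix n n ℂ)).PosSemidef := by
      have := h2.add h1
      rwa [sub_add_sub_cancel] at this
    exact my_eig_ge hA.1 hAm'
  have hAM : ∀ i, hA.1.eigenvalues i ≤ M := my_eig_le hA.1 h3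
  have hBm : ∀ i, m ≤ hB.1.eigenvalues i := my_eig_ge hB.1 h1
  have hBM : ∀ i, hB.1.eigenvalues i ≤ M := by
    have hBM' : (M • (1 : Matrix n n ℂ) - B).PosSemidef := by
      have := h3.add h2
      rwa [sub_add_sub_cancel] at this
    exact my_eig_le hB.1 hBM'
  -- the three positive semidefinite pieces
  have psd1 : (hA.1.cfc (fun t : ℝ => K * t ^ p + (-μ * t + -ν))).PosSemidef := by
    refine my_cfc_posSemidef hA.1 _ fun i => ?_
    have hub := my_upper hm hmM hp hK (hA.1.eigenvalues i) (lt_of_lt_of_le hm (hAm i))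
    rw [← hμ, ← hν] at hub
    linarith
  have psd2 : (μ • (A - B)).PosSemidef := my_psd_smul h2 hμ0
  have psd3 : (hB.1.cfc (fun t : ℝ => (-1) * t ^ p + (μ * t + ν))).PosSemidef := by
    refine my_cfc_posSemidef hB.1 _ fun i => ?_
    have hlb := my_chord hm hmM hp (hB.1.eigenvalues i) ⟨hBm i, hBM i⟩
    rw [← hμ, ← hν] at hlb
    linarith
  have key : K • hA.1.cfc (fun t : ℝ => t ^ p) - hB.1.cfc (fun t : ℝ => t ^ p)
      = hA.1.cfc (fun t : ℝ => K * t ^ p + (-μ * t + -ν))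
        + (μ • (A - B) + hB.1.cfc (fun t : ℝ => (-1) * t ^ p + (μ * t + ν))) := by
    rw [my_cfc_comb hA.1 K (-μ) (-ν) (fun t : ℝ => t ^ p),
      my_cfc_comb hB.1 (-1) μ ν (fun t : ℝ => t ^ p)]
    module
  rw [key]
  exact psd1.add (psd2.add psd3)
end

section
/- Let X, Y be positive semidefinite n×n Hermitian matrices with X ⪯ cY for some c > 0, and let η = η(X,Y) be the unique PSD matrix supported on range(Y) with X = Y^{1/2} η Y^{1/2}. Then lim_{ε→0+} (X + εI)(Y + εI)^{-1}(X + εI) = Y^{1/2} η² Y^{1/2}. -/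
open scoped ComplexOrder

open Filter Topology
open scoped Matrix.Norms.L2Operator

namespace Stmt12Aux

open Matrix

variable {n : Type*} [Fintype n] [DecidableEq n] {Y : Matrix n n ℂ} (hY : Y.IsHermitian)

lemma star_mul_self' :
    (star (hY.eigenvectorUnitary : Matrix n n ℂ)) * (hY.eigenvectorUnitary : Matrix n n ℂ) = 1 :=
  Unitary.coe_star_mul_self _

lemma mul_star_self' :
    (hY.eigenvectorUnitary : Matrix n n ℂ) * (star (hY.eigenvectorUnitary : Matrix n n ℂ)) = 1 :=
  Unitary.coe_mul_star_self _

lemma cfc_mul' (f g : ℝ → ℝ) :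
    hY.cfc f * hY.cfc g = hY.cfc fun t => f t * g t := by
  set U := (hY.eigenvectorUnitary : Matrix n n ℂ) with hU
  simp only [Matrix.IsHermitian.cfc, Function.comp_def]
  calc U * diagonal (fun i => (f (hY.eigenvalues i) : ℂ)) * star U *
        (U * diagonal (fun i => (g (hY.eigenvalues i) : ℂ)) * star U)
      = U * (diagonal (fun i => (f (hY.eigenvalues i) : ℂ)) * ((star U * U) *
          (diagonal (fun i => (g (hY.eigenvalues i) : ℂ)) * star U))) := by
        simp only [mul_assoc]
    _ = U * (diagonal (fun i => (f (hY.eigenvalues i) : ℂ)) *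
          diagonal (fun i => (g (hY.eigenvalues i) : ℂ))) * star U := by
        rw [star_mul_self' hY, one_mul, ← mul_assoc, ← mul_assoc, mul_assoc U]
    _ = _ := by
        rw [diagonal_mul_diagonal]
        norm_cast

lemma cfc_congr' (f g : ℝ → ℝ) (h : ∀ i, f (hY.eigenvalues i) = g (hY.eigenvalues i)) :
    hY.cfc f = hY.cfc g := by
  simp only [Matrix.IsHermitian.cfc, Function.comp_def]
  have h2 : (fun i => (RCLike.ofReal (K := ℂ) (f (hY.eigenvalues i)))) =
      fun i => (RCLike.ofReal (K := ℂ) (g (hY.eigenvalues i))) := by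
    funext i; rw [h]
  rw [h2]

lemma cfc_id' : hY.cfc id = Y := by
  simpa only [Matrix.IsHermitian.cfc, Function.comp_def, id_eq] using hY.spectral_theorem.symm

lemma cfc_one' : hY.cfc (fun _ => 1) = 1 := by
  simp only [Matrix.IsHermitian.cfc, Function.comp_def]
  simp [mul_star_self' hY]

lemma cfc_zero' : hY.cfc (fun _ => 0) = 0 := by
  simp [Matrix.IsHermitian.cfc, Function.comp_def]

lemma cfc_add' (f g : ℝ → ℝ) :
    hY.cfc f + hY.cfc g = hY.cfc fun t => f t + g t := by
  simp only [Matrix.IsHermitian.cfc, Function.comp_def, Unitary.conjStarAlgAut_apply]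
  rw [← add_mul, ← mul_add, diagonal_add]
  norm_cast

lemma smul_one_eq_cfc (ε : ℝ) : ε • (1 : Matrix n n ℂ) = hY.cfc (fun _ => ε) := by
  simp only [Matrix.IsHermitian.cfc, Function.comp_def, Unitary.conjStarAlgAut_apply]
  rw [← algebraMap_smul ℂ ε (1 : Matrix n n ℂ), Complex.coe_algebraMap]
  conv_rhs => rw [← smul_one_eq_diagonal, mul_smul_comm, mul_one, smul_mul_assoc,
    mul_star_self' hY]
  rfl

lemma cfc_isHermitian (f : ℝ → ℝ) : (hY.cfc f).IsHermitian := by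
  simp only [Matrix.IsHermitian.cfc, Function.comp_def, Unitary.conjStarAlgAut_apply]
  simp only [Matrix.IsHermitian, conjTranspose_mul, conjTranspose_conjTranspose,
    star_eq_conjTranspose, diagonal_conjTranspose, Pi.star_def, RCLike.star_def,
    RCLike.conj_ofReal, mul_assoc]

lemma cfc_tendsto {α : Type*} {l : Filter α} {g : α → ℝ → ℝ} {g₀ : ℝ → ℝ}
    (h : ∀ i, Tendsto (fun x => g x (hY.eigenvalues i)) l (𝓝 (g₀ (hY.eigenvalues i)))) :
    Tendsto (fun x => hY.cfc (g x)) l (𝓝 (hY.cfc g₀)) := by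
  let L : (n → ℝ) →ₗ[ℝ] Matrix n n ℂ :=
    { toFun := fun v => (hY.eigenvectorUnitary : Matrix n n ℂ) *
        diagonal (fun i => (RCLike.ofReal (K := ℂ) (v i))) *
        star (hY.eigenvectorUnitary : Matrix n n ℂ)
      map_add' := by
        intro v w
        rw [← add_mul, ← mul_add, diagonal_add]
        norm_cast
      map_smul' := by
        intro r v
        simp only [RingHom.id_apply, Pi.smul_apply, smul_eq_mul]
        rw [show (fun i => (RCLike.ofReal (K := ℂ) (r * v i))) =
            r • (fun i => RCLike.ofReal (K := ℂ) (v i)) by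
          funext i
          simp only [Pi.smul_apply, RCLike.ofReal_mul, RCLike.real_smul_eq_coe_mul]]
        rw [diagonal_smul]
        simp only [smul_mul_assoc, mul_smul_comm] }
  have hL : Continuous L := L.continuous_of_finiteDimensional
  have he : ∀ f : ℝ → ℝ, hY.cfc f = L (fun i => f (hY.eigenvalues i)) := fun f => rfl
  have hp : Tendsto (fun x i => g x (hY.eigenvalues i)) l (𝓝 fun i => g₀ (hY.eigenvalues i)) :=
    tendsto_pi_nhds.mpr h
  simpa only [← he, Function.comp_def] using ((hL.tendsto _).comp hp)

lemma inv_eq_cfc (hnn : ∀ i, 0 ≤ hY.eigenvalues i) (ε : ℝ) (hε : 0 < ε) :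
    (Y + ε • 1)⁻¹ = hY.cfc fun t => (t + ε)⁻¹ := by
  apply Matrix.inv_eq_left_inv
  have hsum : hY.cfc (fun t => t + ε) = Y + ε • 1 := by
    have h2 := (cfc_add' hY id (fun _ => ε)).symm
    simp only [id] at h2
    rw [h2, cfc_id' hY, ← smul_one_eq_cfc hY]
  rw [← hsum, cfc_mul']
  rw [cfc_congr' hY (fun t => (t + ε)⁻¹ * (t + ε)) (fun _ => 1)
    (fun i => inv_mul_cancel₀ (by have := hnn i; positivity)), cfc_one']

lemma tendstoA {t : ℝ} (ht : 0 ≤ t) :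
    Tendsto (fun ε : ℝ => Real.sqrt t * (t + ε)⁻¹ * Real.sqrt t) (𝓝[>] 0)
      (𝓝 (if t = 0 then 0 else 1)) := by
  rcases eq_or_lt_of_le ht with h | h
  · simp only [← h, Real.sqrt_zero, zero_mul, mul_zero, if_pos rfl]
    exact tendsto_const_nhds
  · rw [if_neg h.ne']
    have h1 : Tendsto (fun ε : ℝ => Real.sqrt t * (t + ε)⁻¹ * Real.sqrt t) (𝓝 0)
        (𝓝 (Real.sqrt t * (t + 0)⁻¹ * Real.sqrt t)) :=
      (tendsto_const_nhds.mul ((tendsto_const_nhds.add tendsto_id).inv₀ (by positivity))).mul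
        tendsto_const_nhds
    have h2 : Real.sqrt t * (t + 0)⁻¹ * Real.sqrt t = 1 := by
      rw [add_zero, mul_comm (Real.sqrt t), mul_assoc, Real.mul_self_sqrt ht]
      exact inv_mul_cancel₀ h.ne'
    rw [h2] at h1
    exact h1.mono_left nhdsWithin_le_nhds

lemma tendstoB {t : ℝ} (ht : 0 ≤ t) :
    Tendsto (fun ε : ℝ => Real.sqrt t * (t + ε)⁻¹ * ε) (𝓝[>] 0) (𝓝 0) := by
  rcases eq_or_lt_of_le ht with h | h
  · simp only [← h, Real.sqrt_zero, zero_mul]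
    exact tendsto_const_nhds
  · have h1 : Tendsto (fun ε : ℝ => Real.sqrt t * (t + ε)⁻¹ * ε) (𝓝 0)
        (𝓝 (Real.sqrt t * (t + 0)⁻¹ * 0)) :=
      (tendsto_const_nhds.mul ((tendsto_const_nhds.add tendsto_id).inv₀ (by positivity))).mul
        tendsto_id
    rw [mul_zero] at h1
    exact h1.mono_left nhdsWithin_le_nhds

lemma tendstoD {t : ℝ} (ht : 0 ≤ t) :
    Tendsto (fun ε : ℝ => ε * (t + ε)⁻¹ * ε) (𝓝[>] 0) (𝓝 0) := by
  rcases eq_or_lt_of_le ht with h | h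
  · apply Tendsto.congr' (f₁ := fun ε : ℝ => ε)
    · filter_upwards [self_mem_nhdsWithin] with ε hε
      rw [← h, zero_add, mul_inv_cancel₀ (ne_of_gt hε), one_mul]
    · exact tendsto_id.mono_left nhdsWithin_le_nhds
  · have h1 : Tendsto (fun ε : ℝ => ε * (t + ε)⁻¹ * ε) (𝓝 0)
        (𝓝 (0 * (t + 0)⁻¹ * 0)) :=
      (tendsto_id.mul ((tendsto_const_nhds.add tendsto_id).inv₀ (by positivity))).mul tendsto_id
    rw [mul_zero] at h1
    exact h1.mono_left nhdsWithin_le_nhds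

end Stmt12Aux

/-- The square root of a positive semidefinite matrix, as `Matrix.PosSemidef.sqrt` was defined
in the older Mathlib (it has since been removed). -/
noncomputable def Matrix.PosSemidef.sqrt {n : Type*} [Fintype n] [DecidableEq n]
    {𝕜 : Type*} [RCLike 𝕜] {A : Matrix n n 𝕜} (hA : A.PosSemidef) : Matrix n n 𝕜 :=
  hA.1.eigenvectorUnitary.1 * Matrix.diagonal ((↑) ∘ (√·) ∘ hA.1.eigenvalues) *
    (star hA.1.eigenvectorUnitary : Matrix n n 𝕜)

open Stmt12Aux in
/-- If `X ⪯ cY` for PSD matrices and `η` is the canonical PSD matrix supported on the range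
of `Y` with `X = Y^{1/2} η Y^{1/2}`, then
`(X + εI)(Y + εI)⁻¹(X + εI) → Y^{1/2} η² Y^{1/2}` as `ε → 0+`. -/
theorem stmt12 {n : Type*} [Fintype n] [DecidableEq n]
    (X Y : Matrix n n ℂ) (hX : X.PosSemidef) (hY : Y.PosSemidef)
    (c : ℝ) (hc : 0 < c) (hXY : (c • Y - X).PosSemidef)
    (P : Matrix n n ℂ) (hP : P = hY.1.cfc (fun t : ℝ => if t = 0 then 0 else 1))
    (η : Matrix n n ℂ) (hη : η.PosSemidef)
    (hsupp : η * ((1 : Matrix n n ℂ) - P) = 0)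
    (hfact : X = hY.sqrt * η * hY.sqrt) :
    Tendsto (fun ε : ℝ =>
        (X + ε • (1 : Matrix n n ℂ)) * (Y + ε • (1 : Matrix n n ℂ))⁻¹ *
          (X + ε • (1 : Matrix n n ℂ)))
      (𝓝[>] (0:ℝ)) (𝓝 (hY.sqrt * η ^ 2 * hY.sqrt)) := by
  have hYH := hY.1
  have hS : hY.sqrt = hYH.cfc Real.sqrt := rfl
  have hnn : ∀ i, 0 ≤ hYH.eigenvalues i := hY.eigenvalues_nonneg
  set S := hY.sqrt with hSdef
  have key : ∀ ε : ℝ, 0 < ε →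
      (X + ε • 1) * (Y + ε • 1)⁻¹ * (X + ε • 1) =
        (S * η * hYH.cfc (fun t => Real.sqrt t * (t + ε)⁻¹ * Real.sqrt t) * η * S +
            S * η * hYH.cfc (fun t => Real.sqrt t * (t + ε)⁻¹ * ε)) +
          (hYH.cfc (fun t => Real.sqrt t * (t + ε)⁻¹ * ε) * η * S +
            hYH.cfc (fun t => ε * (t + ε)⁻¹ * ε)) := by
    intro ε hε
    rw [hfact, inv_eq_cfc hYH hnn ε hε, smul_one_eq_cfc hYH ε, hS]
    have hmulA : ∀ Z : Matrix n n ℂ,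
        hYH.cfc Real.sqrt * (hYH.cfc (fun t => (t + ε)⁻¹) * (hYH.cfc Real.sqrt * Z)) =
          hYH.cfc (fun t => Real.sqrt t * (t + ε)⁻¹ * Real.sqrt t) * Z := by
      intro Z
      rw [← mul_assoc, ← mul_assoc, cfc_mul', cfc_mul']
    have hmulB :
        hYH.cfc Real.sqrt * (hYH.cfc (fun t => (t + ε)⁻¹) * hYH.cfc (fun _ => ε)) =
          hYH.cfc (fun t => Real.sqrt t * (t + ε)⁻¹ * ε) := by
      rw [← mul_assoc, cfc_mul', cfc_mul']
    have hmulC : ∀ Z : Matrix n n ℂ,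
        hYH.cfc (fun _ => ε) * (hYH.cfc (fun t => (t + ε)⁻¹) * (hYH.cfc Real.sqrt * Z)) =
          hYH.cfc (fun t => Real.sqrt t * (t + ε)⁻¹ * ε) * Z := by
      intro Z
      rw [← mul_assoc, ← mul_assoc, cfc_mul', cfc_mul',
        cfc_congr' hYH (fun t => ε * (t + ε)⁻¹ * Real.sqrt t)
          (fun t => Real.sqrt t * (t + ε)⁻¹ * ε) (fun i => by ring)]
    have hmulD :
        hYH.cfc (fun _ => ε) * (hYH.cfc (fun t => (t + ε)⁻¹) * hYH.cfc (fun _ => ε)) =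
          hYH.cfc (fun t => ε * (t + ε)⁻¹ * ε) := by
      rw [← mul_assoc, cfc_mul', cfc_mul']
    simp only [mul_add, add_mul, mul_assoc]
    rw [hmulA, hmulB, hmulC, hmulD]
    simp only [mul_assoc]
    abel
  have hTA : Tendsto
      (fun ε : ℝ => hYH.cfc (fun t => Real.sqrt t * (t + ε)⁻¹ * Real.sqrt t))
      (𝓝[>] (0:ℝ)) (𝓝 P) := by
    rw [hP]
    exact cfc_tendsto hYH (fun i => tendstoA (hnn i))
  have hTB : Tendsto (fun ε : ℝ => hYH.cfc (fun t => Real.sqrt t * (t + ε)⁻¹ * ε))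
      (𝓝[>] (0:ℝ)) (𝓝 (0 : Matrix n n ℂ)) := by
    rw [← cfc_zero' hYH]
    exact cfc_tendsto hYH (fun i => tendstoB (hnn i))
  have hTD : Tendsto (fun ε : ℝ => hYH.cfc (fun t => ε * (t + ε)⁻¹ * ε))
      (𝓝[>] (0:ℝ)) (𝓝 (0 : Matrix n n ℂ)) := by
    rw [← cfc_zero' hYH]
    exact cfc_tendsto hYH (fun i => tendstoD (hnn i))
  have hlim : Tendsto (fun ε : ℝ =>
      (S * η * hYH.cfc (fun t => Real.sqrt t * (t + ε)⁻¹ * Real.sqrt t) * η * S +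
          S * η * hYH.cfc (fun t => Real.sqrt t * (t + ε)⁻¹ * ε)) +
        (hYH.cfc (fun t => Real.sqrt t * (t + ε)⁻¹ * ε) * η * S +
          hYH.cfc (fun t => ε * (t + ε)⁻¹ * ε)))
      (𝓝[>] (0:ℝ))
      (𝓝 ((S * η * P * η * S + S * η * (0 : Matrix n n ℂ)) +
        ((0 : Matrix n n ℂ) * η * S + 0))) := by
    exact ((((tendsto_const_nhds.mul hTA).mul tendsto_const_nhds).mul
        tendsto_const_nhds).add (tendsto_const_nhds.mul hTB)).add
      (((hTB.mul tendsto_const_nhds).mul tendsto_const_nhds).add hTD)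
  have hηP : η * P = η := by
    have h1 : η * 1 - η * P = 0 := by rw [← mul_sub]; exact hsupp
    rw [mul_one, sub_eq_zero] at h1
    exact h1.symm
  have hPH : P.IsHermitian := by rw [hP]; exact cfc_isHermitian hYH _
  have hPη : P * η = η := by
    have h1 := congrArg Matrix.conjTranspose hηP
    rwa [Matrix.conjTranspose_mul, hη.1, hPH] at h1
  have heq : (S * η * P * η * S + S * η * (0 : Matrix n n ℂ)) +
      ((0 : Matrix n n ℂ) * η * S + 0) = S * η ^ 2 * S := by
    simp only [mul_zero, zero_mul, add_zero]
    rw [mul_assoc S η P, hηP, sq, ← mul_assoc]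
  rw [heq] at hlim
  refine Tendsto.congr' ?_ hlim
  filter_upwards [self_mem_nhdsWithin] with ε hε
  exact (key ε hε).symm
end
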